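/- Let J be a real 2×2 matrix with tr(J) < 0, det(J) > 0, D = diag(1,d) with 0 < d < 1, B_λ = D⁻¹(J - λI), and suppose tr(B_λ)² - 4 det(B_λ) > 0 and tr(B_λ) > 0 for a real λ > 0. Define μ±_λ = (tr(B_λ) ± sqrt(tr(B_λ)² - 4 det(B_λ)))/2. Then the derivatives with respect to λ satisfy ∂_λ μ⁻_λ > 0 and ∂_λ μ⁺_λ < 0. -/

import Mathlib

/-!
Differentiating `μ² - tr(B_λ) μ + det(B_λ) = 0` gives `±√Δ · ∂_λ μ± = tr(B_λ)' μ± - det(B_λ)'`,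
where `Δ = tr(B_λ)² - 4 det(B_λ)`, `tr(B_λ)' = -(1 + 1/d) < 0` and `det(B_λ)' = (2λ - tr J)/d > 0`.
Both roots are positive, since their sum `tr(B_λ)` and their product
`det(B_λ) = (det J - λ tr J + λ²)/d` are, so the right-hand side is negative.
-/

open Matrix

/-- The diffusion matrix D = diag(1, d). -/
noncomputable def Dmat (d : ℝ) : Matrix (Fin 2) (Fin 2) ℝ := !![1, 0; 0, d]

/-- B_λ = D⁻¹ (J - λ I). -/
noncomputable def Bmat (J : Matrix (Fin 2) (Fin 2) ℝ) (d lam : ℝ) :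
    Matrix (Fin 2) (Fin 2) ℝ := (Dmat d)⁻¹ * (J - lam • 1)

/-- The larger eigenvalue μ⁺_λ of B_λ. -/
noncomputable def muP (J : Matrix (Fin 2) (Fin 2) ℝ) (d : ℝ) (lam : ℝ) : ℝ :=
  ((Bmat J d lam).trace +
    Real.sqrt ((Bmat J d lam).trace ^ 2 - 4 * (Bmat J d lam).det)) / 2

/-- The smaller eigenvalue μ⁻_λ of B_λ. -/
noncomputable def muM (J : Matrix (Fin 2) (Fin 2) ℝ) (d : ℝ) (lam : ℝ) : ℝ :=
  ((Bmat J d lam).trace -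
    Real.sqrt ((Bmat J d lam).trace ^ 2 - 4 * (Bmat J d lam).det)) / 2

section QuadraticRoot

variable {T δ : ℝ → ℝ} {T' δ' x : ℝ}

theorem hasDerivAt_sqrt_discriminant (hT : HasDerivAt T T' x) (hδ : HasDerivAt δ δ' x)
    (hΔ : 0 < T x ^ 2 - 4 * δ x) :
    HasDerivAt (fun y => √(T y ^ 2 - 4 * δ y))
      ((2 * T x * T' - 4 * δ') / (2 * √(T x ^ 2 - 4 * δ x))) x := by
  refine (((hT.fun_pow 2).fun_sub (hδ.const_mul 4)).congr_deriv ?_).sqrt hΔ.ne'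
  norm_num

theorem hasDerivAt_quadratic_root_add (hT : HasDerivAt T T' x) (hδ : HasDerivAt δ δ' x)
    (hΔ : 0 < T x ^ 2 - 4 * δ x) :
    HasDerivAt (fun y => (T y + √(T y ^ 2 - 4 * δ y)) / 2)
      ((T' * ((T x + √(T x ^ 2 - 4 * δ x)) / 2) - δ') / √(T x ^ 2 - 4 * δ x)) x := by
  refine ((hT.add (hasDerivAt_sqrt_discriminant hT hδ hΔ)).div_const 2).congr_deriv ?_
  have hs : 0 < √(T x ^ 2 - 4 * δ x) := Real.sqrt_pos.2 hΔ
  field_simp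
  ring

theorem hasDerivAt_quadratic_root_sub (hT : HasDerivAt T T' x) (hδ : HasDerivAt δ δ' x)
    (hΔ : 0 < T x ^ 2 - 4 * δ x) :
    HasDerivAt (fun y => (T y - √(T y ^ 2 - 4 * δ y)) / 2)
      ((T' * ((T x - √(T x ^ 2 - 4 * δ x)) / 2) - δ') / -√(T x ^ 2 - 4 * δ x)) x := by
  refine ((hT.sub (hasDerivAt_sqrt_discriminant hT hδ hΔ)).div_const 2).congr_deriv ?_
  have hs : 0 < √(T x ^ 2 - 4 * δ x) := Real.sqrt_pos.2 hΔ
  field_simp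
  ring

end QuadraticRoot

theorem quadratic_root_sub_pos {t p : ℝ} (ht : 0 < t) (hp : 0 < p) :
    0 < (t - √(t ^ 2 - 4 * p)) / 2 := by
  have : √(t ^ 2 - 4 * p) < t := (Real.sqrt_lt' ht).2 (by linarith)
  linarith

section Bmat

variable (J : Matrix (Fin 2) (Fin 2) ℝ) {d : ℝ} (lam : ℝ)

theorem Dmat_inv (hd : d ≠ 0) : (Dmat d)⁻¹ = !![1, 0; 0, d⁻¹] := by
  apply Matrix.inv_eq_left_inv
  ext i j
  fin_cases i <;> fin_cases j <;>
    simp [Dmat, Matrix.mul_apply, Fin.sum_univ_two, inv_mul_cancel₀ hd]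

theorem Bmat_eq (hd : d ≠ 0) :
    Bmat J d lam = !![J 0 0 - lam, J 0 1; d⁻¹ * J 1 0, d⁻¹ * (J 1 1 - lam)] := by
  rw [Bmat, Dmat_inv hd]
  ext i j
  fin_cases i <;> fin_cases j <;>
    simp [Matrix.mul_apply, Fin.sum_univ_two, Matrix.one_apply]

theorem trace_Bmat (hd : d ≠ 0) :
    (Bmat J d lam).trace = (J 0 0 - lam) + d⁻¹ * (J 1 1 - lam) := by
  simp [Bmat_eq J lam hd, Matrix.trace_fin_two]

theorem det_Bmat (hd : d ≠ 0) :
    (Bmat J d lam).det = d⁻¹ * (J.det - lam * J.trace + lam ^ 2) := by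
  rw [Bmat_eq J lam hd, Matrix.det_fin_two_of, Matrix.det_fin_two, Matrix.trace_fin_two]
  ring

theorem hasDerivAt_trace_Bmat (hd : d ≠ 0) :
    HasDerivAt (fun l => (Bmat J d l).trace) (-(1 + d⁻¹)) lam := by
  simp only [trace_Bmat J _ hd]
  have hid := hasDerivAt_id' lam
  exact ((hid.const_sub _).fun_add ((hid.const_sub _).const_mul _)).congr_deriv (by ring)

theorem hasDerivAt_det_Bmat (hd : d ≠ 0) :
    HasDerivAt (fun l => (Bmat J d l).det) (d⁻¹ * (2 * lam - J.trace)) lam := by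
  simp only [det_Bmat J _ hd]
  have hid := hasDerivAt_id' lam
  exact ((((hid.mul_const _).const_sub _).fun_add (hid.fun_pow 2)).const_mul _).congr_deriv
    (by simp only [Nat.cast_ofNat, Nat.add_one_sub_one, pow_one]; ring)

end Bmat

theorem stmt6_general (J : Matrix (Fin 2) (Fin 2) ℝ) (d lam : ℝ)
    (hd : 0 < d)
    (htr : J.trace < 0) (hdet : 0 < J.det) (hlam : 0 < lam)
    (hB : 0 < (Bmat J d lam).trace)
    (hP : 0 < (Bmat J d lam).trace ^ 2 - 4 * (Bmat J d lam).det) :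
    0 < deriv (muM J d) lam ∧ deriv (muP J d) lam < 0 := by
  have hT := hasDerivAt_trace_Bmat J lam hd.ne'
  have hδ := hasDerivAt_det_Bmat J lam hd.ne'
  set s := √((Bmat J d lam).trace ^ 2 - 4 * (Bmat J d lam).det)
  have hμM' : HasDerivAt (muM J d)
      ((-(1 + d⁻¹) * muM J d lam - d⁻¹ * (2 * lam - J.trace)) / -s) lam :=
    hasDerivAt_quadratic_root_sub hT hδ hP
  have hμP' : HasDerivAt (muP J d)
      ((-(1 + d⁻¹) * muP J d lam - d⁻¹ * (2 * lam - J.trace)) / s) lam :=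
    hasDerivAt_quadratic_root_add hT hδ hP
  have hdetB : 0 < (Bmat J d lam).det := by
    rw [det_Bmat J lam hd.ne']
    have : 0 < J.det - lam * J.trace + lam ^ 2 := by nlinarith
    positivity
  have hμM : 0 < muM J d lam := quadratic_root_sub_pos hB hdetB
  have hμP : 0 < muP J d lam := by unfold muP; positivity
  have hdetB_deriv : 0 < d⁻¹ * (2 * lam - J.trace) := by
    have : 0 < 2 * lam - J.trace := by linarith
    positivity
  have hs : 0 < s := Real.sqrt_pos.2 hP
  rw [hμM'.deriv, hμP'.deriv]
  constructor
  · refine div_pos_of_neg_of_neg ?_ (neg_neg_of_pos hs)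
    linarith [mul_pos (by positivity : (0 : ℝ) < 1 + d⁻¹) hμM]
  · refine div_neg_of_neg_of_pos ?_ hs
    linarith [mul_pos (by positivity : (0 : ℝ) < 1 + d⁻¹) hμP]

theorem stmt6 (J : Matrix (Fin 2) (Fin 2) ℝ) (d lam : ℝ)
    (hd : 0 < d) (hd1 : d < 1)
    (htr : J.trace < 0) (hdet : 0 < J.det) (hlam : 0 < lam)
    (hB : 0 < (Bmat J d lam).trace)
    (hP : 0 < (Bmat J d lam).trace ^ 2 - 4 * (Bmat J d lam).det) :
    0 < deriv (muM J d) lam ∧ deriv (muP J d) lam < 0 :=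
  stmt6_general J d lam hd htr hdet hlam hB hP
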